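/- For every ℓ with r ≤ ℓ ≤ n−1 one has, in H(χ): (V_ℓ − p^{n−ℓ−1}(p−1)·V_n) * (V_ℓ + Y_{ℓ+1}) = 0, where V_n is the identity element of H(χ) and Y_{ℓ+1} = Σ_{i=ℓ+1}^{n} V_i. -/

import Mathlib

/-!
Write `Y_I` for the function supported on `Γ₀(I) = {g | g₂₁ ∈ I}` and equal to `χ(g₂₂)` there.
For `r ≤ ℓ` the ideal `(p^ℓ)` is nilpotent and `χ` is trivial on `1 + (p^ℓ)`, so `g ↦ χ(g₂₂)` is
a character of `Γ₀(p^ℓ)`. Since `B × (p^m) ≃ Γ₀(p^m)`, `(b, t) ↦ b y(t)`, this gives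
`Y_{p^m} * Y_{p^ℓ} = |Γ₀(p^m)| / |B| • Y_{p^ℓ} = p^{n-m} • Y_{p^ℓ}` for `ℓ ≤ m`.
The double coset `B y_j B` is the set of `g` whose entry `g₂₁` has valuation exactly `j`, so
`V_j = Y_{p^j} - Y_{p^{j+1}}` for `j < n`, `V_n = Y_{p^n}`, and `V_ℓ + Y_{ℓ+1} = Y_{p^ℓ}`.
The product is therefore `(p^{n-ℓ} - p^{n-ℓ-1} - p^{n-ℓ-1}(p - 1)) • Y_{p^ℓ} = 0`.
-/

noncomputable section

/-- `y(t) = (1,0;t,1)` as an element of `GL₂(R)`. -/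
def yG {R : Type*} [CommRing R] (t : R) : GL (Fin 2) R :=
  ⟨!![1, 0; t, 1], !![1, 0; -t, 1],
   by ext i j; fin_cases i <;> fin_cases j <;> simp [Matrix.mul_apply, Fin.sum_univ_two],
   by ext i j; fin_cases i <;> fin_cases j <;> simp [Matrix.mul_apply, Fin.sum_univ_two]⟩

/-- Membership in the subgroup `B` of invertible upper triangular matrices. -/
def inB {R : Type*} [CommRing R] (g : GL (Fin 2) R) : Prop :=
  (g : Matrix (Fin 2) (Fin 2) R) 1 0 = 0

/-- `χ_B(b) = χ(d_b)`, where `d_b` is the `(2,2)`-entry of `b` (for `b ∈ B` this entry is a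
unit; the function is extended by `0` elsewhere). -/
def chiB {R : Type*} [CommRing R] (χ : Rˣ →* ℂˣ) (g : GL (Fin 2) R) : ℂ :=
  letI := Classical.dec (IsUnit ((g : Matrix (Fin 2) (Fin 2) R) 1 1))
  if h : IsUnit ((g : Matrix (Fin 2) (Fin 2) R) 1 1) then (χ h.unit : ℂ) else 0

/-- `|B|`. -/
def cardB (R : Type*) [CommRing R] : ℕ := Nat.card {g : GL (Fin 2) R // inB g}

/-- Convolution `(f*g)(x) = |B|⁻¹ Σ_{y∈G} f(y) g(y⁻¹x)`. -/
def conv {R : Type*} [CommRing R] [Fintype R] [DecidableEq R]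
    (f g : GL (Fin 2) R → ℂ) : GL (Fin 2) R → ℂ :=
  fun x => (cardB R : ℂ)⁻¹ * ∑ y : GL (Fin 2) R, f y * g (y⁻¹ * x)

/-- Membership in the Hecke algebra `H(χ)` of `χ_B`-bi-equivariant functions on `G`. -/
def memH {R : Type*} [CommRing R] (χ : Rˣ →* ℂˣ) (f : GL (Fin 2) R → ℂ) : Prop :=
  ∀ b x b' : GL (Fin 2) R, inB b → inB b' →
    f (b * x * b') = chiB χ b * chiB χ b' * f x

/-- `V_j`: the unique element of `H(χ)` vanishing off the double coset `B y_j B` with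
`V_j(y_j) = 1`, where `y_j = (1,0;p^j,1)`. -/
def isV (p n : ℕ) (χ : (ZMod (p ^ n))ˣ →* ℂˣ) (j : ℕ)
    (V : GL (Fin 2) (ZMod (p ^ n)) → ℂ) : Prop :=
  memH χ V ∧
  (∀ x : GL (Fin 2) (ZMod (p ^ n)),
      (¬ ∃ b b' : GL (Fin 2) (ZMod (p ^ n)), inB b ∧ inB b' ∧
          x = b * yG ((p : ZMod (p ^ n)) ^ j) * b') → V x = 0) ∧
  V (yG ((p : ZMod (p ^ n)) ^ j)) = 1

/-- `χ` has conductor `p^r`: trivial on units `≡ 1 (mod p^r)`, nontrivial on units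
`≡ 1 (mod p^{r−1})`. -/
def hasConductor (p n r : ℕ) (χ : (ZMod (p ^ n))ˣ →* ℂˣ) : Prop :=
  (∀ u : (ZMod (p ^ n))ˣ, (p : ZMod (p ^ n)) ^ r ∣ ((u : ZMod (p ^ n)) - 1) → χ u = 1) ∧
  ∃ u : (ZMod (p ^ n))ˣ, (p : ZMod (p ^ n)) ^ (r - 1) ∣ ((u : ZMod (p ^ n)) - 1) ∧ χ u ≠ 1

theorem Subgroup.sum_indicator_mul_indicator_inv_mul {G M : Type*} [Group G] [Fintype G]
    [CommSemiring M] {H K : Subgroup G} (hHK : H ≤ K) {ψ : G → M}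
    (hψ : ∀ g ∈ K, ∀ h ∈ K, ψ (g * h) = ψ g * ψ h) (x : G) :
    ∑ y, (H : Set G).indicator ψ y * (K : Set G).indicator ψ (y⁻¹ * x)
      = Nat.card H * (K : Set G).indicator ψ x := by
  classical
  have hterm : ∀ y, (H : Set G).indicator ψ y * (K : Set G).indicator ψ (y⁻¹ * x)
      = if y ∈ H then (K : Set G).indicator ψ x else 0 := by
    intro y
    by_cases hy : y ∈ H
    · have hyK : y ∈ K := hHK hy
      by_cases hx : x ∈ K
      · have hyx : y⁻¹ * x ∈ K := K.mul_mem (K.inv_mem hyK) hx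
        simp only [SetLike.mem_coe, Set.indicator_of_mem, hy, hx, hyx, if_true,
          ← hψ _ hyK _ hyx, mul_inv_cancel_left]
      · have hyx : y⁻¹ * x ∉ K := fun h => hx (by simpa using K.mul_mem hyK h)
        simp [hy, hx, hyx]
    · simp [hy]
  rw [Finset.sum_congr rfl fun y _ => hterm y, Finset.sum_ite, Finset.sum_const_zero, add_zero,
    Finset.sum_const, nsmul_eq_mul, Nat.card_eq_fintype_card, Fintype.card_subtype]

lemma Ideal.isUnit_add_of_mem_jacobson_bot {R : Type*} [CommRing R] {u x : R} (hu : IsUnit u)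
    (hx : x ∈ (⊥ : Ideal R).jacobson) : IsUnit (u + x) := by
  obtain ⟨v, rfl⟩ := hu
  have hxv := Ideal.mem_jacobson_bot.mp hx ↑v⁻¹
  rw [show (v : R) + x = v * (x * ↑v⁻¹ + 1) by
    rw [mul_add, mul_one, mul_comm x, ← mul_assoc, Units.mul_inv, one_mul, add_comm]]
  exact v.isUnit.mul hxv

lemma MonoidHom.map_units_eq_of_sub_mem {R M : Type*} [CommRing R] [Monoid M] {I : Ideal R}
    {χ : Rˣ →* M} (hχ : ∀ u : Rˣ, (u : R) - 1 ∈ I → χ u = 1) {u v : Rˣ} (h : (u : R) - v ∈ I) :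
    χ u = χ v := by
  have h1 : χ (v⁻¹ * u) = 1 := hχ _ <| by
    rw [Units.val_mul, show (↑v⁻¹ * ↑u - 1 : R) = ↑v⁻¹ * (↑u - ↑v) by
      rw [mul_sub, Units.inv_mul]]
    exact I.mul_mem_left _ h
  rw [← mul_inv_cancel_left v u, map_mul, h1, mul_one]

namespace GL2

variable {R : Type*} [CommRing R]

def a (g : GL (Fin 2) R) : R := (g : Matrix (Fin 2) (Fin 2) R) 0 0
def b (g : GL (Fin 2) R) : R := (g : Matrix (Fin 2) (Fin 2) R) 0 1
def c (g : GL (Fin 2) R) : R := (g : Matrix (Fin 2) (Fin 2) R) 1 0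
def d (g : GL (Fin 2) R) : R := (g : Matrix (Fin 2) (Fin 2) R) 1 1

lemma c_mul (g h : GL (Fin 2) R) : c (g * h) = c g * a h + d g * c h := by
  simp [c, a, d, Matrix.mul_apply, Fin.sum_univ_two]

lemma d_mul (g h : GL (Fin 2) R) : d (g * h) = c g * b h + d g * d h := by
  simp [d, c, b, Matrix.mul_apply, Fin.sum_univ_two]

lemma c_inv (g : GL (Fin 2) R) :
    c g⁻¹ = -(Ring.inverse (g : Matrix (Fin 2) (Fin 2) R).det * c g) := by
  simp [c, Matrix.coe_units_inv, Matrix.inv_def, Matrix.adjugate_fin_two]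

lemma isUnit_det (g : GL (Fin 2) R) : IsUnit (a g * d g - b g * c g) := by
  have h := (Matrix.isUnit_iff_isUnit_det _).mp g.isUnit
  rwa [Matrix.det_fin_two] at h

@[simp] lemma a_yG (t : R) : a (yG t) = 1 := rfl
@[simp] lemma b_yG (t : R) : b (yG t) = 0 := rfl
@[simp] lemma c_yG (t : R) : c (yG t) = t := rfl
@[simp] lemma d_yG (t : R) : d (yG t) = 1 := rfl

lemma yG_mul_yG (s t : R) : yG s * yG t = yG (s + t) := by
  ext i j
  fin_cases i <;> fin_cases j <;> simp [yG, Matrix.mul_apply, Fin.sum_univ_two, add_comm]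

lemma yG_zero : yG (0 : R) = 1 := by
  ext i j
  fin_cases i <;> fin_cases j <;> simp [yG]

lemma yG_mul_yG_neg (t : R) : yG t * yG (-t) = 1 := by
  rw [yG_mul_yG, add_neg_cancel, yG_zero]

def diag (u : Rˣ) : GL (Fin 2) R :=
  ⟨!![(u : R), 0; 0, 1], !![((u⁻¹ : Rˣ) : R), 0; 0, 1],
   by ext i j; fin_cases i <;> fin_cases j <;> simp [Matrix.mul_apply, Fin.sum_univ_two],
   by ext i j; fin_cases i <;> fin_cases j <;> simp [Matrix.mul_apply, Fin.sum_univ_two]⟩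

lemma inB_diag (u : Rˣ) : inB (diag u) := rfl

lemma diag_inv_mul_yG_mul_diag (u : Rˣ) (t : R) : diag u⁻¹ * yG t * diag u = yG (t * u) := by
  ext i j
  fin_cases i <;> fin_cases j <;> simp [diag, yG, Matrix.mul_apply, Fin.sum_univ_two]

def Gamma0 (I : Ideal R) : Subgroup (GL (Fin 2) R) where
  carrier := {g | c g ∈ I}
  mul_mem' {g h} (hg : c g ∈ I) (hh : c h ∈ I) := show c (g * h) ∈ I by
    rw [c_mul]
    exact I.add_mem (I.mul_mem_right _ hg) (I.mul_mem_left _ hh)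
  one_mem' := by simp [c]
  inv_mem' {g} (hg : c g ∈ I) := show c g⁻¹ ∈ I by
    rw [c_inv]
    exact I.neg_mem (I.mul_mem_left _ hg)

lemma mem_Gamma0 {I : Ideal R} {g : GL (Fin 2) R} : g ∈ Gamma0 I ↔ c g ∈ I := Iff.rfl

lemma inB_iff_mem_Gamma0_bot {g : GL (Fin 2) R} : inB g ↔ g ∈ Gamma0 (⊥ : Ideal R) :=
  Ideal.mem_bot.symm

variable {I : Ideal R}

lemma Gamma0_mono {J : Ideal R} (h : I ≤ J) : Gamma0 I ≤ Gamma0 J :=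
  fun _ hg => h hg

lemma mem_Gamma0_of_inB {g : GL (Fin 2) R} (hg : inB g) : g ∈ Gamma0 I :=
  show c g ∈ I by rw [show c g = 0 from hg]; exact I.zero_mem

lemma isUnit_d_of_mem_Gamma0 (hI : I ≤ (⊥ : Ideal R).jacobson) {g : GL (Fin 2) R}
    (hg : g ∈ Gamma0 I) : IsUnit (d g) := by
  have had : IsUnit (a g * d g) := by
    simpa using Ideal.isUnit_add_of_mem_jacobson_bot (isUnit_det g) (hI (I.mul_mem_left (b g) hg))
  exact isUnit_of_mul_isUnit_right had

lemma chiB_eq (χ : Rˣ →* ℂˣ) {g : GL (Fin 2) R} {u : Rˣ} (h : d g = u) : chiB χ g = χ u := by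
  have hu : IsUnit ((g : Matrix (Fin 2) (Fin 2) R) 1 1) := show IsUnit (d g) from h ▸ u.isUnit
  rw [chiB, dif_pos hu]
  congr 3
  exact Units.ext h

lemma chiB_yG (χ : Rˣ →* ℂˣ) (t : R) : chiB χ (yG t) = 1 := by
  rw [chiB_eq χ (u := 1) rfl, map_one, Units.val_one]

lemma chiB_mul (hI : I ≤ (⊥ : Ideal R).jacobson) {χ : Rˣ →* ℂˣ}
    (hχ : ∀ u : Rˣ, (u : R) - 1 ∈ I → χ u = 1) {g h : GL (Fin 2) R}
    (hg : g ∈ Gamma0 I) (hh : h ∈ Gamma0 I) : chiB χ (g * h) = chiB χ g * chiB χ h := by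
  obtain ⟨u, hu⟩ := isUnit_d_of_mem_Gamma0 hI hg
  obtain ⟨v, hv⟩ := isUnit_d_of_mem_Gamma0 hI hh
  obtain ⟨w, hw⟩ := isUnit_d_of_mem_Gamma0 hI (mul_mem hg hh)
  have hwuv : χ w = χ (u * v) := MonoidHom.map_units_eq_of_sub_mem hχ <| by
    rw [hw, Units.val_mul, hu, hv, d_mul, add_sub_cancel_right]
    exact I.mul_mem_right _ hg
  rw [chiB_eq χ hw.symm, chiB_eq χ hu.symm, chiB_eq χ hv.symm, hwuv, map_mul, Units.val_mul]

lemma inB_mul {g h : GL (Fin 2) R} (hg : inB g) (hh : inB h) : inB (g * h) :=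
  inB_iff_mem_Gamma0_bot.mpr <|
    mul_mem (inB_iff_mem_Gamma0_bot.mp hg) (inB_iff_mem_Gamma0_bot.mp hh)

lemma isUnit_a_of_inB {g : GL (Fin 2) R} (hg : inB g) : IsUnit (a g) := by
  have h := isUnit_det g
  rw [show c g = 0 from hg, mul_zero, sub_zero] at h
  exact isUnit_of_mul_isUnit_left h

lemma isUnit_d_of_inB {g : GL (Fin 2) R} (hg : inB g) : IsUnit (d g) :=
  isUnit_d_of_mem_Gamma0 bot_le (mem_Gamma0_of_inB hg)

lemma inB_mul_yG_neg {x : GL (Fin 2) R} (hx : IsUnit (d x)) :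
    inB (x * yG (-(c x * Ring.inverse (d x)))) := by
  show c _ = 0
  rw [c_mul, a_yG, c_yG, mul_one, mul_neg, ← mul_assoc, mul_comm (d x), mul_assoc,
    Ring.mul_inverse_cancel _ hx, mul_one, add_neg_cancel]

def borelDoubleCoset (t : R) : Set (GL (Fin 2) R) :=
  {x | ∃ g₁ g₂, inB g₁ ∧ inB g₂ ∧ x = g₁ * yG t * g₂}

lemma mem_borelDoubleCoset_iff {t : R} (ht : t ∈ (⊥ : Ideal R).jacobson) {x : GL (Fin 2) R} :
    x ∈ borelDoubleCoset t ↔ ∃ u : Rˣ, c x = t * u := by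
  constructor
  · rintro ⟨g₁, g₂, hg₁, hg₂, rfl⟩
    refine ⟨(isUnit_d_of_inB hg₁).unit * (isUnit_a_of_inB hg₂).unit, ?_⟩
    simp only [c_mul, d_mul, show c g₁ = 0 from hg₁, show c g₂ = 0 from hg₂, a_yG, c_yG,
      Units.val_mul, IsUnit.unit_spec]
    ring
  · rintro ⟨u, hu⟩
    have hxd : IsUnit (d x) := isUnit_d_of_mem_Gamma0 ((Ideal.span_singleton_le_iff_mem _).mpr ht)
      (Ideal.mem_span_singleton'.mpr ⟨u, by rw [hu, mul_comm]⟩)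
    -- `x = x y(-s) * y(s)` with `s = c/d = t w`, and `y(t w)` is `y(t)` conjugated by `diag w`
    set s := c x * Ring.inverse (d x)
    let w : Rˣ := u * hxd.unit⁻¹
    refine ⟨x * yG (-s) * diag w⁻¹, diag w, inB_mul (inB_mul_yG_neg hxd) (inB_diag _),
      inB_diag _, ?_⟩
    have hs : s = t * w := by
      simp only [s, w, hu, Units.val_mul, mul_assoc, Ring.inverse_of_isUnit hxd]
    rw [mul_assoc (x * yG (-s)), mul_assoc (x * yG (-s)), diag_inv_mul_yG_mul_diag, ← hs,
      mul_assoc, yG_mul_yG, neg_add_cancel, yG_zero, mul_one]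

lemma borelDoubleCoset_zero :
    borelDoubleCoset (0 : R) = Gamma0 (⊥ : Ideal R) := by
  ext x
  rw [mem_borelDoubleCoset_iff (Ideal.zero_mem _)]
  simp [mem_Gamma0]

lemma eq_indicator_borelDoubleCoset (hI : I ≤ (⊥ : Ideal R).jacobson) {χ : Rˣ →* ℂˣ}
    (hχ : ∀ u : Rˣ, (u : R) - 1 ∈ I → χ u = 1) {t : R} (ht : t ∈ I) {f : GL (Fin 2) R → ℂ}
    (hf : memH χ f) (hsupp : ∀ x ∉ borelDoubleCoset t, f x = 0) (hft : f (yG t) = 1) :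
    f = (borelDoubleCoset t).indicator (chiB χ) := by
  funext x
  by_cases hx : x ∈ borelDoubleCoset t
  · rw [Set.indicator_of_mem hx]
    obtain ⟨g₁, g₂, hg₁, hg₂, rfl⟩ := hx
    have hyt : yG t ∈ Gamma0 I := ht
    rw [hf _ _ _ hg₁ hg₂, hft,
      chiB_mul hI hχ (mul_mem (mem_Gamma0_of_inB hg₁) hyt) (mem_Gamma0_of_inB hg₂),
      chiB_mul hI hχ (mem_Gamma0_of_inB hg₁) hyt, chiB_yG]
    ring
  · rw [Set.indicator_of_notMem hx, hsupp x hx]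

def borelProdEquivGamma0 (hI : I ≤ (⊥ : Ideal R).jacobson) :
    {g : GL (Fin 2) R // inB g} × I ≃ Gamma0 I where
  toFun z := ⟨z.1.1 * yG z.2.1, show c _ ∈ I by
    rw [c_mul, show c z.1.1 = 0 from z.1.2, a_yG, c_yG, zero_mul, zero_add]
    exact I.mul_mem_left _ z.2.2⟩
  invFun x := (⟨_, inB_mul_yG_neg (isUnit_d_of_mem_Gamma0 hI x.2)⟩,
    ⟨c x.1 * Ring.inverse (d x.1), I.mul_mem_right _ x.2⟩)
  left_inv := by
    rintro ⟨⟨g, hg⟩, t, ht⟩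
    have hct : c (g * yG t) * Ring.inverse (d (g * yG t)) = t := by
      rw [c_mul, d_mul, show c g = 0 from hg, a_yG, c_yG, d_yG, b_yG, zero_mul, zero_add,
        zero_mul, zero_add, mul_one, mul_comm, ← mul_assoc,
        Ring.inverse_mul_cancel _ (isUnit_d_of_inB hg), one_mul]
    ext1
    · simp only [hct, mul_assoc, yG_mul_yG_neg, mul_one]
    · simp only [hct]
  right_inv x := by
    ext1
    simp only [mul_assoc, yG_mul_yG, neg_add_cancel, yG_zero, mul_one]

lemma card_Gamma0 [Finite R] (hI : I ≤ (⊥ : Ideal R).jacobson) :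
    Nat.card (Gamma0 I) = cardB R * Nat.card I := by
  rw [← Nat.card_congr (borelProdEquivGamma0 hI), Nat.card_prod, cardB]

def chiGamma0 (χ : Rˣ →* ℂˣ) (I : Ideal R) : GL (Fin 2) R → ℂ :=
  (Gamma0 I : Set (GL (Fin 2) R)).indicator (chiB χ)

lemma conv_chiGamma0 [Fintype R] [DecidableEq R] (hI : I ≤ (⊥ : Ideal R).jacobson)
    {χ : Rˣ →* ℂˣ} (hχ : ∀ u : Rˣ, (u : R) - 1 ∈ I → χ u = 1) {J : Ideal R} (hJI : J ≤ I) :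
    conv (chiGamma0 χ J) (chiGamma0 χ I) = (Nat.card J : ℂ) • chiGamma0 χ I := by
  funext x
  have hB : (cardB R : ℂ) ≠ 0 := by
    rw [cardB, Nat.cast_ne_zero, Nat.card_ne_zero]
    exact ⟨⟨⟨1, rfl⟩⟩, inferInstance⟩
  rw [conv, chiGamma0, chiGamma0, Subgroup.sum_indicator_mul_indicator_inv_mul
    (fun g (hg : c g ∈ J) => hJI hg) (fun g hg h hh => chiB_mul hI hχ hg hh),
    card_Gamma0 (hJI.trans hI), Pi.smul_apply, smul_eq_mul, Nat.cast_mul]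
  field_simp

end GL2

section Convolution

variable {R : Type*} [CommRing R] [Fintype R] [DecidableEq R]

lemma conv_sub_left (f₁ f₂ g : GL (Fin 2) R → ℂ) :
    conv (f₁ - f₂) g = conv f₁ g - conv f₂ g := by
  funext x
  simp only [conv, Pi.sub_apply, sub_mul, Finset.sum_sub_distrib, mul_sub]

lemma conv_smul_left (z : ℂ) (f g : GL (Fin 2) R → ℂ) : conv (z • f) g = z • conv f g := by
  funext x
  simp only [conv, Pi.smul_apply, smul_eq_mul, mul_assoc, ← Finset.mul_sum]
  ring

end Convolution

def IsTrivialModPow (p n r : ℕ) (χ : (ZMod (p ^ n))ˣ →* ℂˣ) : Prop :=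
  ∀ u : (ZMod (p ^ n))ˣ, (p : ZMod (p ^ n)) ^ r ∣ ((u : ZMod (p ^ n)) - 1) → χ u = 1

lemma ZMod.card_span_singleton {N : ℕ} (x : ZMod N) :
    Nat.card (Ideal.span {x}) = addOrderOf x := by
  rw [← Nat.card_zmultiples]
  refine Nat.card_congr (Equiv.subtypeEquivRight fun y => ?_)
  rw [Ideal.mem_span_singleton', AddSubgroup.mem_zmultiples_iff]
  constructor
  · rintro ⟨z, rfl⟩
    exact ⟨z.cast, by rw [zsmul_eq_mul, ZMod.intCast_zmod_cast]⟩
  · rintro ⟨k, rfl⟩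
    exact ⟨k, (zsmul_eq_mul _ _).symm⟩

section PrimePower

variable {p n : ℕ}

lemma ZMod.isNilpotent_natCast_self_pow : IsNilpotent (p : ZMod (p ^ n)) :=
  ⟨n, by rw [← Nat.cast_pow, ZMod.natCast_self]⟩

lemma ZMod.span_pow_le_jacobson {m : ℕ} (hm : 1 ≤ m) :
    Ideal.span {(p : ZMod (p ^ n)) ^ m} ≤ (⊥ : Ideal (ZMod (p ^ n))).jacobson :=
  (Ideal.span_singleton_le_iff_mem _).mpr <| Ideal.radical_le_jacobson <|
    mem_nilradical.mpr (ZMod.isNilpotent_natCast_self_pow.pow_of_pos (by omega))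

open GL2

variable {r : ℕ} {χ : (ZMod (p ^ n))ˣ →* ℂˣ}

lemma map_eq_one_of_sub_one_mem_span_pow (hχ : IsTrivialModPow p n r χ) {m : ℕ} (hrm : r ≤ m)
    (u : (ZMod (p ^ n))ˣ) (hu : (u : ZMod (p ^ n)) - 1 ∈ Ideal.span {(p : ZMod (p ^ n)) ^ m}) :
    χ u = 1 :=
  hχ u ((pow_dvd_pow _ hrm).trans (Ideal.mem_span_singleton.mp hu))

lemma isV_eq_indicator (hr : 1 ≤ r) (hχ : IsTrivialModPow p n r χ) {j : ℕ} (hrj : r ≤ j)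
    {V : GL (Fin 2) (ZMod (p ^ n)) → ℂ} (hV : isV p n χ j V) :
    V = (borelDoubleCoset ((p : ZMod (p ^ n)) ^ j)).indicator (chiB χ) :=
  eq_indicator_borelDoubleCoset (ZMod.span_pow_le_jacobson (hr.trans hrj))
    (map_eq_one_of_sub_one_mem_span_pow hχ hrj) (Ideal.mem_span_singleton_self _) hV.1 hV.2.1
    hV.2.2

lemma isV_self_eq_chiGamma0 (hr : 1 ≤ r) (hχ : IsTrivialModPow p n r χ) (hrn : r ≤ n)
    {V : GL (Fin 2) (ZMod (p ^ n)) → ℂ} (hV : isV p n χ n V) :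
    V = chiGamma0 χ (Ideal.span {(p : ZMod (p ^ n)) ^ n}) := by
  have hpn : (p : ZMod (p ^ n)) ^ n = 0 := by rw [← Nat.cast_pow, ZMod.natCast_self]
  rw [isV_eq_indicator hr hχ hrn hV, hpn, borelDoubleCoset_zero,
    Ideal.span_singleton_eq_bot.mpr rfl]
  rfl

variable [Fact p.Prime]

lemma ZMod.natCast_dvd_of_not_isUnit {z : ZMod (p ^ n)} (hz : ¬ IsUnit z) :
    (p : ZMod (p ^ n)) ∣ z := by
  have hp : p.Prime := Fact.out
  rw [← ZMod.natCast_zmod_val z, ZMod.isUnit_iff_coprime] at hz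
  rw [← ZMod.natCast_zmod_val z]
  refine Nat.cast_dvd_cast ((hp.coprime_iff_not_dvd.not_left).mp fun h => hz ?_)
  exact Nat.Coprime.pow_right n h.symm

lemma ZMod.card_span_pow {m : ℕ} (hmn : m ≤ n) :
    Nat.card (Ideal.span {(p : ZMod (p ^ n)) ^ m}) = p ^ (n - m) := by
  have hp : 0 < p := (Fact.out : p.Prime).pos
  rw [ZMod.card_span_singleton, ← Nat.cast_pow, ZMod.addOrderOf_coe _ (by positivity),
    Nat.gcd_eq_right (pow_dvd_pow p hmn), Nat.pow_div hmn hp]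

lemma ZMod.exists_unit_mul_pow_iff {j : ℕ} (hjn : j < n) (x : ZMod (p ^ n)) :
    (∃ u : (ZMod (p ^ n))ˣ, x = (p : ZMod (p ^ n)) ^ j * u) ↔
      (p : ZMod (p ^ n)) ^ j ∣ x ∧ ¬ (p : ZMod (p ^ n)) ^ (j + 1) ∣ x := by
  constructor
  · rintro ⟨u, rfl⟩
    refine ⟨dvd_mul_right _ _, fun ⟨z, hz⟩ => ?_⟩
    have hunit : IsUnit (1 - (p : ZMod (p ^ n)) * (z * ↑u⁻¹)) :=
      ((Commute.all _ _).isNilpotent_mul_right ZMod.isNilpotent_natCast_self_pow).isUnit_one_sub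
    have hzero : (p : ZMod (p ^ n)) ^ j * (1 - p * (z * ↑u⁻¹)) = 0 := by
      linear_combination (↑u⁻¹ : ZMod (p ^ n)) * hz - (p : ZMod (p ^ n)) ^ j * (u.mul_inv)
    rw [hunit.mul_left_eq_zero, ← Nat.cast_pow, ZMod.natCast_eq_zero_iff,
      Nat.pow_dvd_pow_iff_le_right (Fact.out : p.Prime).one_lt] at hzero
    omega
  · rintro ⟨⟨z, rfl⟩, hnot⟩
    by_cases hz : IsUnit z
    · exact ⟨hz.unit, rfl⟩
    · exact absurd (pow_succ (p : ZMod (p ^ n)) j ▸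
        mul_dvd_mul_left _ (ZMod.natCast_dvd_of_not_isUnit hz)) hnot

lemma borelDoubleCoset_pow_eq_sdiff {j : ℕ} (hj : 1 ≤ j) (hjn : j < n) :
    borelDoubleCoset ((p : ZMod (p ^ n)) ^ j)
      = (Gamma0 (Ideal.span {(p : ZMod (p ^ n)) ^ j}) : Set (GL (Fin 2) (ZMod (p ^ n))))
        \ Gamma0 (Ideal.span {(p : ZMod (p ^ n)) ^ (j + 1)}) := by
  ext x
  rw [mem_borelDoubleCoset_iff (ZMod.span_pow_le_jacobson hj (Ideal.mem_span_singleton_self _)),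
    Set.mem_sdiff, SetLike.mem_coe, SetLike.mem_coe, mem_Gamma0, mem_Gamma0,
    Ideal.mem_span_singleton, Ideal.mem_span_singleton, ← ZMod.exists_unit_mul_pow_iff hjn]

lemma isV_eq_sub_of_lt (hr : 1 ≤ r) (hχ : IsTrivialModPow p n r χ) {j : ℕ} (hrj : r ≤ j)
    (hjn : j < n) {V : GL (Fin 2) (ZMod (p ^ n)) → ℂ} (hV : isV p n χ j V) :
    V = chiGamma0 χ (Ideal.span {(p : ZMod (p ^ n)) ^ j})
      - chiGamma0 χ (Ideal.span {(p : ZMod (p ^ n)) ^ (j + 1)}) := by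
  rw [isV_eq_indicator hr hχ hrj hV, borelDoubleCoset_pow_eq_sdiff (hr.trans hrj) hjn,
    Set.indicator_sdiff (Gamma0_mono (Ideal.span_singleton_le_span_singleton.mpr
      (pow_dvd_pow _ j.le_succ)))]
  rfl

lemma sum_Icc_eq_chiGamma0_of_isV (hr : 1 ≤ r) (hχ : IsTrivialModPow p n r χ)
    {V : ℕ → GL (Fin 2) (ZMod (p ^ n)) → ℂ} (hV : ∀ j, r ≤ j → j ≤ n → isV p n χ j (V j))
    {m : ℕ} (hrm : r ≤ m) (hmn : m ≤ n) :
    ∑ i ∈ Finset.Icc m n, V i = chiGamma0 χ (Ideal.span {(p : ZMod (p ^ n)) ^ m}) := by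
  induction hmn using Nat.decreasingInduction with
  | self =>
    rw [Finset.Icc_self, Finset.sum_singleton, isV_self_eq_chiGamma0 hr hχ hrm (hV n hrm le_rfl)]
  | of_succ k hkn ih =>
    rw [← Finset.sum_Ioc_add_eq_sum_Icc hkn.le, ← Finset.Icc_add_one_left_eq_Ioc, ih (by omega),
      isV_eq_sub_of_lt hr hχ hrm hkn (hV k hrm hkn.le), add_sub_cancel]

lemma conv_chiGamma0_span_pow (hr : 1 ≤ r) (hχ : IsTrivialModPow p n r χ) {ℓ m : ℕ}
    (hrℓ : r ≤ ℓ) (hℓm : ℓ ≤ m) (hmn : m ≤ n) :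
    conv (chiGamma0 χ (Ideal.span {(p : ZMod (p ^ n)) ^ m}))
        (chiGamma0 χ (Ideal.span {(p : ZMod (p ^ n)) ^ ℓ}))
      = ((p : ℂ) ^ (n - m)) • chiGamma0 χ (Ideal.span {(p : ZMod (p ^ n)) ^ ℓ}) := by
  rw [conv_chiGamma0 (ZMod.span_pow_le_jacobson (hr.trans hrℓ))
    (map_eq_one_of_sub_one_mem_span_pow hχ hrℓ)
    (Ideal.span_singleton_le_span_singleton.mpr (pow_dvd_pow _ hℓm)), ZMod.card_span_pow hmn,
    Nat.cast_pow]

end PrimePower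

theorem stmt7_general (p n r : ℕ) [Fact p.Prime] (hr : 1 ≤ r)
    (χ : (ZMod (p ^ n))ˣ →* ℂˣ) (hχ : hasConductor p n r χ)
    (V : ℕ → GL (Fin 2) (ZMod (p ^ n)) → ℂ)
    (hV : ∀ j, r ≤ j → j ≤ n → isV p n χ j (V j))
    (ℓ : ℕ) (hℓ : r ≤ ℓ) (hℓn : ℓ ≤ n - 1) :
    ∀ x, conv (fun t => V ℓ t - (p : ℂ) ^ (n - ℓ - 1) * ((p : ℂ) - 1) * V n t)
        (fun t => V ℓ t + ∑ i ∈ Finset.Icc (ℓ + 1) n, V i t) x = 0 := by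
  set Y : ℕ → GL (Fin 2) (ZMod (p ^ n)) → ℂ :=
    fun m => GL2.chiGamma0 χ (Ideal.span {(p : ZMod (p ^ n)) ^ m})
  have hVℓ : V ℓ = Y ℓ - Y (ℓ + 1) :=
    isV_eq_sub_of_lt hr hχ.1 hℓ (by omega) (hV ℓ hℓ (by omega))
  have hVn : V n = Y n := isV_self_eq_chiGamma0 hr hχ.1 (by omega) (hV n (by omega) le_rfl)
  have hYℓ : (fun t => V ℓ t + ∑ i ∈ Finset.Icc (ℓ + 1) n, V i t) = Y ℓ := by
    funext t
    rw [← Finset.sum_apply, sum_Icc_eq_chiGamma0_of_isV hr hχ.1 hV (by omega) (by omega), hVℓ,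
      Pi.sub_apply, sub_add_cancel]
  have hcoeff : (fun t => V ℓ t - (p : ℂ) ^ (n - ℓ - 1) * ((p : ℂ) - 1) * V n t)
      = Y ℓ - Y (ℓ + 1) - ((p : ℂ) ^ (n - ℓ - 1) * ((p : ℂ) - 1)) • Y n := by
    rw [← hVℓ, ← hVn]
    rfl
  intro x
  rw [hcoeff, hYℓ, conv_sub_left, conv_sub_left, conv_smul_left,
    conv_chiGamma0_span_pow hr hχ.1 hℓ le_rfl (by omega),
    conv_chiGamma0_span_pow hr hχ.1 hℓ (by omega) (by omega),
    conv_chiGamma0_span_pow hr hχ.1 hℓ (by omega) le_rfl,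
    show n - (ℓ + 1) = n - ℓ - 1 by omega, Nat.sub_self,
    show (p : ℂ) ^ (n - ℓ) = p ^ (n - ℓ - 1) * p by rw [← pow_succ]; congr 1; omega]
  simp only [Pi.sub_apply, Pi.smul_apply, smul_eq_mul]
  ring

/-- For `r ≤ ℓ ≤ n−1`: `(V_ℓ − p^{n−ℓ−1}(p−1)·V_n) * (V_ℓ + Y_{ℓ+1}) = 0` in `H(χ)`,
where `V_n` is the identity of `H(χ)` and `Y_{ℓ+1} = Σ_{i=ℓ+1}^n V_i`. -/
theorem stmt7 (p n r : ℕ) [Fact p.Prime] (hn : 1 ≤ n) (hr : 1 ≤ r) (hrn : r ≤ n)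
    (χ : (ZMod (p ^ n))ˣ →* ℂˣ) (hχ : hasConductor p n r χ)
    (V : ℕ → GL (Fin 2) (ZMod (p ^ n)) → ℂ)
    (hV : ∀ j, r ≤ j → j ≤ n → isV p n χ j (V j))
    (ℓ : ℕ) (hℓ : r ≤ ℓ) (hℓn : ℓ ≤ n - 1) :
    ∀ x, conv (fun t => V ℓ t - (p : ℂ) ^ (n - ℓ - 1) * ((p : ℂ) - 1) * V n t)
        (fun t => V ℓ t + ∑ i ∈ Finset.Icc (ℓ + 1) n, V i t) x = 0 :=
  stmt7_general p n r hr χ hχ V hV ℓ hℓ hℓn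

end
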